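/- arXiv:2510.25043 — 5 statements merged into one kernel-verified Lean document; each statement's English description precedes it below -/
import Mathlib

section
/- Let V be a finite set and let E be a finite family of hedges, where each hedge e is a set of subsets (hyperedges) of V. Define f(A) = |V| − (number of connected components of the hypergraph on V whose edge set is the union of all hyperedges belonging to hedges in A). Then f is submodular: f(A) + f(B) ≥ f(A ∪ B) + f(A ∩ B) for all A, B ⊆ E. -/
open Finset

attribute [local instance] Classical.propDecidable

noncomputable section

variable {V E : Type*}

/-- The simple graph on `V` induced by the hyperedges of the hedges in `A`. -/
def hgGraph (hedge : E → Finset (Finset V)) (A : Finset E) : SimpleGraph V where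
  Adj u v := u ≠ v ∧ ∃ e ∈ A, ∃ h ∈ hedge e, u ∈ h ∧ v ∈ h
  symm := by
    constructor
    rintro u v ⟨hne, e, he, h, hh, hu, hv⟩
    exact ⟨hne.symm, e, he, h, hh, hv, hu⟩
  loopless := by constructor; rintro u ⟨hne, -⟩; exact hne rfl

/-- Number of connected components of the sub-hedgegraph `(V, A)`. -/
def comps (hedge : E → Finset (Finset V)) (A : Finset E) : ℕ :=
  Nat.card (hgGraph hedge A).ConnectedComponent

/-- The hedgegraph polymatroid `f(A) = |V| - #Comps(V,A)`. -/
def fH [Fintype V] (hedge : E → Finset (Finset V)) (A : Finset E) : ℕ :=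
  Fintype.card V - comps hedge A

/-!
Write `c G` for the number of connected components of a graph `G`. Adding an edge `uv` lowers
`c` by one when `u` and `v` lie in different components and leaves it unchanged otherwise. If
`G ≤ H` and `u`, `v` are connected in `G`, they are connected in `H`, so an edge lowers `c G` at
least as much as `c H`. Adding the edges of a graph `K` one at a time gives
`c H + c (G ⊔ K) ≤ c G + c (H ⊔ K)` for `G ≤ H`; with `G, H, K` the graphs of `A ∩ B`, `A`, `B`
this is the submodularity of `|V| - c`.
-/

namespace SimpleGraph

lemma Reachable.sup_edge_cases {G : SimpleGraph V} {u v a b : V}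
    (h : (G ⊔ edge u v).Reachable a b) :
    G.Reachable a b ∨ (G.Reachable a u ∧ G.Reachable v b) ∨
      (G.Reachable a v ∧ G.Reachable u b) := by
  obtain ⟨w⟩ := h
  induction w with
  | nil => exact Or.inl .rfl
  | cons hadj _ ih =>
    rcases hadj with hadj | hadj
    · have hstep := hadj.reachable
      exact ih.imp hstep.trans
        (Or.imp (And.imp_left hstep.trans) (And.imp_left hstep.trans))
    · obtain ⟨⟨rfl, rfl⟩ | ⟨rfl, rfl⟩, -⟩ := (edge_adj ..).mp hadj
      · rcases ih with h | ⟨-, h⟩ | ⟨-, h⟩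
        exacts [Or.inr (Or.inl ⟨.rfl, h⟩), Or.inr (Or.inl ⟨.rfl, h⟩), Or.inl h]
      · rcases ih with h | ⟨-, h⟩ | ⟨-, h⟩
        exacts [Or.inr (Or.inr ⟨.rfl, h⟩), Or.inl h, Or.inr (Or.inr ⟨.rfl, h⟩)]

variable {G H : SimpleGraph V} {u v : V}

lemma card_connectedComponent_sup_edge_of_reachable (h : G.Reachable u v) :
    Nat.card (G ⊔ edge u v).ConnectedComponent = Nat.card G.ConnectedComponent := by
  refine (Nat.card_eq_of_bijective _ ⟨?_, ConnectedComponent.surjective_map_ofLE le_sup_left⟩).symm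
  refine ConnectedComponent.ind₂ fun a b hab => ?_
  simp only [ConnectedComponent.map_mk, ConnectedComponent.eq] at hab ⊢
  rcases hab.sup_edge_cases with hab | ⟨hau, hvb⟩ | ⟨hav, hub⟩
  exacts [hab, hau.trans (h.trans hvb), hav.trans (h.symm.trans hub)]

variable [Finite V]

/-- In the non-reachable case the components of `G ⊔ edge u v` are those of `G` other than the
component of `v`, which is merged into that of `u`. -/
lemma card_connectedComponent_sup_edge_add_one (h : ¬ G.Reachable u v) :
    Nat.card (G ⊔ edge u v).ConnectedComponent + 1 = Nat.card G.ConnectedComponent := by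
  have huv : u ≠ v := by rintro rfl; exact h .rfl
  let merge : ({G.connectedComponentMk v}ᶜ : Set G.ConnectedComponent) →
      (G ⊔ edge u v).ConnectedComponent := fun c => c.1.map (Hom.ofLE le_sup_left)
  have hmerge : Function.Bijective merge := by
    constructor
    · rintro ⟨c, hc⟩ ⟨d, hd⟩ hcd
      induction c using ConnectedComponent.ind
      induction d using ConnectedComponent.ind
      simp only [Set.mem_compl_iff, Set.mem_singleton_iff, ConnectedComponent.eq] at hc hd
      simp only [merge, ConnectedComponent.map_mk, ConnectedComponent.eq] at hcd
      rcases hcd.sup_edge_cases with hab | ⟨-, hvb⟩ | ⟨hav, -⟩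
      exacts [Subtype.ext (ConnectedComponent.sound hab), (hd hvb.symm).elim, (hc hav).elim]
    · intro c
      induction c using ConnectedComponent.ind with | _ a
      by_cases hav : G.Reachable a v
      · refine ⟨⟨G.connectedComponentMk u, fun hu => h (ConnectedComponent.exact hu)⟩, ?_⟩
        simp only [merge, ConnectedComponent.map_mk, ConnectedComponent.eq]
        have hadj : (G ⊔ edge u v).Adj u v := Or.inr ((edge_adj ..).mpr ⟨Or.inl ⟨rfl, rfl⟩, huv⟩)
        exact hadj.reachable.trans (hav.symm.mono le_sup_left)
      · exact ⟨⟨G.connectedComponentMk a, fun ha => hav (ConnectedComponent.exact ha)⟩, rfl⟩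
  rw [← Nat.card_eq_of_bijective merge hmerge, Nat.card_coe_set_eq,
    ← Set.ncard_singleton (G.connectedComponentMk v), Set.ncard_compl_add_ncard]

lemma card_connectedComponent_add_card_sup_edge_le (hGH : G ≤ H) (u v : V) :
    Nat.card H.ConnectedComponent + Nat.card (G ⊔ edge u v).ConnectedComponent ≤
      Nat.card G.ConnectedComponent + Nat.card (H ⊔ edge u v).ConnectedComponent := by
  by_cases hG : G.Reachable u v
  · rw [card_connectedComponent_sup_edge_of_reachable hG,
      card_connectedComponent_sup_edge_of_reachable (hG.mono hGH), add_comm]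
  · have hG' := card_connectedComponent_sup_edge_add_one hG
    by_cases hH : H.Reachable u v
    · have hH' := card_connectedComponent_sup_edge_of_reachable hH
      have hmono := ConnectedComponent.card_le_card_of_le hGH
      omega
    · have hH' := card_connectedComponent_sup_edge_add_one hH
      omega

lemma card_connectedComponent_add_card_sup_le (hGH : G ≤ H) (K : SimpleGraph V) :
    Nat.card H.ConnectedComponent + Nat.card (G ⊔ K).ConnectedComponent ≤
      Nat.card G.ConnectedComponent + Nat.card (H ⊔ K).ConnectedComponent := by
  suffices ∀ s : Finset (Sym2 V), ∀ G H : SimpleGraph V, G ≤ H →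
      Nat.card H.ConnectedComponent + Nat.card (G ⊔ fromEdgeSet s).ConnectedComponent ≤
        Nat.card G.ConnectedComponent + Nat.card (H ⊔ fromEdgeSet s).ConnectedComponent by
    simpa using this K.edgeSet.toFinite.toFinset G H hGH
  intro s
  induction s using Finset.induction_on with
  | empty =>
    intro G H hGH
    simp only [Finset.coe_empty, fromEdgeSet_empty, sup_bot_eq, add_comm, le_refl]
  | insert e s _ ih =>
    intro G H hGH
    have hsup (G : SimpleGraph V) : G ⊔ fromEdgeSet ↑(insert e s) =
        G ⊔ fromEdgeSet ↑s ⊔ fromEdgeSet {e} := by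
      rw [Finset.coe_insert, Set.insert_eq, fromEdgeSet_union, sup_comm (fromEdgeSet {e}),
        sup_assoc]
    have hs := ih G H hGH
    induction e using Sym2.ind with | _ u v
    have he := card_connectedComponent_add_card_sup_edge_le (sup_le_sup_right hGH
      (fromEdgeSet ↑s)) u v
    rw [hsup, hsup]
    unfold edge at he
    omega

end SimpleGraph

lemma hgGraph_mono (hedge : E → Finset (Finset V)) {A B : Finset E} (h : A ⊆ B) :
    hgGraph hedge A ≤ hgGraph hedge B := by
  rintro u v ⟨hne, e, he, hedge_e⟩
  exact ⟨hne, e, h he, hedge_e⟩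

lemma hgGraph_union [DecidableEq E] (hedge : E → Finset (Finset V)) (A B : Finset E) :
    hgGraph hedge (A ∪ B) = hgGraph hedge A ⊔ hgGraph hedge B := by
  ext u v
  simp only [hgGraph, SimpleGraph.sup_adj, mem_union]
  grind

lemma comps_le_card [Fintype V] (hedge : E → Finset (Finset V)) (A : Finset E) :
    comps hedge A ≤ Fintype.card V := by
  rw [← Nat.card_eq_fintype_card]
  exact Nat.card_le_card_of_surjective _ fun c => c.exists_rep

lemma comps_add_comps_le [Finite V] [DecidableEq E] (hedge : E → Finset (Finset V))
    (A B : Finset E) :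
    comps hedge A + comps hedge B ≤ comps hedge (A ∪ B) + comps hedge (A ∩ B) := by
  have h := SimpleGraph.card_connectedComponent_add_card_sup_le
    (hgGraph_mono hedge (inter_subset_left : A ∩ B ⊆ A)) (hgGraph hedge B)
  rw [← hgGraph_union, ← hgGraph_union, union_eq_right.mpr inter_subset_right] at h
  rw [add_comm (comps hedge (A ∪ B))]
  exact h

theorem hedgegraph_polymatroid_submodular_general [Fintype V]
    [DecidableEq E] (hedge : E → Finset (Finset V)) (A B : Finset E) :
    fH hedge (A ∪ B) + fH hedge (A ∩ B) ≤ fH hedge A + fH hedge B := by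
  have hsuper := comps_add_comps_le hedge A B
  have := comps_le_card hedge A
  have := comps_le_card hedge B
  have := comps_le_card hedge (A ∪ B)
  have := comps_le_card hedge (A ∩ B)
  unfold fH
  omega

/-- The hedgegraph polymatroid is submodular. -/
theorem hedgegraph_polymatroid_submodular [Fintype V] [DecidableEq V]
    [Fintype E] [DecidableEq E] (hedge : E → Finset (Finset V)) (A B : Finset E) :
    fH hedge (A ∪ B) + fH hedge (A ∩ B) ≤ fH hedge A + fH hedge B :=
  hedgegraph_polymatroid_submodular_general hedge A B

end
end

section
/- Let G = (V, E) be a hedgegraph. Define I_G to be the collection of subsets F ⊆ E such that the hedgegraph (V, F) can be trimmed into a forest, i.e., there is a function Y: F → (pairs of vertices) with Y(e) ⊆ h for some hyperedge h ∈ e for each e ∈ F, such that the multigraph on V with edge multiset {Y(e) : e ∈ F} is a forest. Then (E, I_G) satisfies the matroid independence axioms: I_G is downward closed, and if A, B ∈ I_G with |A| < |B| then there exists e ∈ B \ A with A ∪ {e} ∈ I_G. -/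
open Finset

attribute [local instance] Classical.propDecidable

noncomputable section

variable {V E : Type*}

/-- `Y` is a valid trimming of the hedges in `F`: each hedge `e ∈ F` is replaced by an
edge on two distinct vertices both lying in one of its hyperedges. -/
def ValidTrim (hedge : E → Finset (Finset V)) (F : Finset E) (Y : E → V × V) : Prop :=
  ∀ e ∈ F, (Y e).1 ≠ (Y e).2 ∧ ∃ h ∈ hedge e, (Y e).1 ∈ h ∧ (Y e).2 ∈ h

/-- The trimmed multigraph on edge set `F` contains a cycle, i.e. a closed walk of
positive length using pairwise distinct edges. -/
def HasCycle (F : Finset E) (Y : E → V × V) : Prop :=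
  ∃ (k : ℕ) (es : Fin (k + 1) → E) (vs : Fin (k + 1) → V),
    (∀ i, es i ∈ F) ∧ Function.Injective es ∧
    ∀ i : Fin (k + 1), ({(Y (es i)).1, (Y (es i)).2} : Set V) = {vs i, vs (i + 1)}

/-- `F` can be trimmed into a forest (an acyclic multigraph). -/
def AcyclicTrimmable (hedge : E → Finset (Finset V)) (F : Finset E) : Prop :=
  ∃ Y : E → V × V, ValidTrim hedge F Y ∧ ¬ HasCycle F Y

/-!
An acyclic trimming of `F` is a forest, so it has exactly `|V| - |F|` connected components, and
adding an edge keeps it acyclic exactly when the edge joins two different components.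

For the exchange axiom fix an acyclic trimming `Y_B` of `B`, and among the acyclic trimmings of
`A` take one, `Y_A`, disagreeing with `Y_B` on as few hedges of `A ∩ B` as possible. If every
trimmed hedge of `B` stayed inside a component of the `Y_A`-forest, the `Y_B`-forest would have
at least as many components as the `Y_A`-forest, i.e. `|B| ≤ |A|`. So some `e ∈ B` has `Y_B e`
joining two components of the `Y_A`-forest. Retrimming `e` as `Y_B e` keeps `A ∪ {e}` acyclic;
if `e` were in `A`, this would be an acyclic trimming of `A` with fewer disagreements.
-/

open SimpleGraph Function

lemma Finset.card_filter_update_ne_lt {α β : Type*} [DecidableEq α] [DecidableEq β]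
    {s : Finset α} {f g : α → β} {a : α} (ha : a ∈ s) (hfa : f a ≠ g a) :
    #{x ∈ s | update f a (g a) x ≠ g x} < #{x ∈ s | f x ≠ g x} := by
  have : {x ∈ s | update f a (g a) x ≠ g x} = {x ∈ s | f x ≠ g x}.erase a := by
    ext x
    by_cases hx : x = a <;> simp [hx]
  rw [this]
  exact card_erase_lt_of_mem (mem_filter.2 ⟨ha, hfa⟩)

namespace SimpleGraph

variable {G H : SimpleGraph V}

lemma Reachable.of_sym2_eq {a b c d : V} (h : G.Reachable a b) (hs : s(a, b) = s(c, d)) :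
    G.Reachable c d := by
  rcases Sym2.eq_iff.mp hs with ⟨rfl, rfl⟩ | ⟨rfl, rfl⟩
  exacts [h, h.symm]

lemma Reachable.of_forall_adj_reachable (hHG : ∀ ⦃x y⦄, H.Adj x y → G.Reachable x y) {x y : V}
    (h : H.Reachable x y) : G.Reachable x y := by
  obtain ⟨p⟩ := h
  induction p with
  | nil => rfl
  | cons hadj _ ih => exact (hHG hadj).trans ih

lemma reachable_of_forall_ne_reachable_succ {k : ℕ} (vs : Fin (k + 1) → V) (i₀ : Fin (k + 1))
    (h : ∀ j, j ≠ i₀ → G.Reachable (vs j) (vs (j + 1))) : G.Reachable (vs i₀) (vs (i₀ + 1)) := by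
  have key : ∀ j : Fin (k + 1), G.Reachable (vs (i₀ + 1)) (vs (i₀ + 1 + j)) := by
    intro j
    induction j using Fin.induction with
    | zero => rw [add_zero]
    | succ j ih =>
      rw [← Fin.coeSucc_eq_succ, ← add_assoc]
      refine ih.trans (h _ fun hj => (Fin.castSucc_lt_last j).ne (add_right_cancel (b := 1) ?_))
      rw [add_assoc, add_comm 1] at hj
      rw [Fin.last_add_one]
      exact add_eq_left.mp hj
  have := key (Fin.last k)
  rw [add_assoc, add_comm 1, Fin.last_add_one, add_zero] at this
  exact this.symm

lemma reachable_sup_edge {u v x y : V} (h : (G ⊔ edge u v).Reachable x y) :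
    G.Reachable x y ∨ (G.Reachable x u ∧ G.Reachable v y) ∨
      (G.Reachable x v ∧ G.Reachable u y) := by
  obtain ⟨p⟩ := h
  induction p with
  | nil => exact .inl .rfl
  | @cons a b c hadj _ ih =>
    rcases hadj with hadj | hadj
    · have := hadj.reachable
      rcases ih with h | ⟨h₁, h₂⟩ | ⟨h₁, h₂⟩
      exacts [.inl (this.trans h), .inr (.inl ⟨this.trans h₁, h₂⟩),
        .inr (.inr ⟨this.trans h₁, h₂⟩)]
    · obtain ⟨⟨rfl, rfl⟩ | ⟨rfl, rfl⟩, -⟩ := (edge_adj ..).mp hadj <;>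
        rcases ih with h | ⟨h₁, h₂⟩ | ⟨h₁, h₂⟩ <;> simp_all

lemma card_connectedComponent_le_of_forall_adj_reachable [Finite V]
    (hHG : ∀ ⦃x y⦄, H.Adj x y → G.Reachable x y) :
    Nat.card G.ConnectedComponent ≤ Nat.card H.ConnectedComponent :=
  Nat.card_le_card_of_surjective
    (ConnectedComponent.lift G.connectedComponentMk fun _ _ p _ =>
      ConnectedComponent.sound (p.reachable.of_forall_adj_reachable hHG))
    (Quot.ind fun v => ⟨H.connectedComponentMk v, rfl⟩)

lemma card_connectedComponent_sup_edge [Finite V] {u v : V} (huv : ¬G.Reachable u v) :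
    Nat.card (G ⊔ edge u v).ConnectedComponent + 1 = Nat.card G.ConnectedComponent := by
  set φ := ConnectedComponent.map (Hom.ofLE (le_sup_left : G ≤ G ⊔ edge u v))
  have hne : u ≠ v := fun h => huv (h ▸ .rfl)
  have hφuv : φ (G.connectedComponentMk u) = φ (G.connectedComponentMk v) :=
    ConnectedComponent.sound <| Adj.reachable <| .inr ((edge_adj ..).2 ⟨.inl ⟨rfl, rfl⟩, hne⟩)
  -- away from the component of `v`, `φ` is a bijection
  let f : {c // c ≠ G.connectedComponentMk v} → (G ⊔ edge u v).ConnectedComponent := fun c => φ c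
  have hf : Bijective f := by
    refine ⟨?_, fun c' => ?_⟩
    · rintro ⟨c, hc⟩ ⟨d, hd⟩ hcd
      induction c using ConnectedComponent.ind with | h x => ?_
      induction d using ConnectedComponent.ind with | h y => ?_
      rcases reachable_sup_edge (ConnectedComponent.exact hcd) with h | ⟨-, h⟩ | ⟨h, -⟩
      · exact Subtype.ext (ConnectedComponent.sound h)
      · exact absurd (ConnectedComponent.sound h.symm) hd
      · exact absurd (ConnectedComponent.sound h) hc
    · obtain ⟨c, rfl⟩ := ConnectedComponent.surjective_map_ofLE le_sup_left c'
      by_cases hc : c = G.connectedComponentMk v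
      · exact ⟨⟨_, fun h => huv (ConnectedComponent.exact h)⟩, hc ▸ hφuv⟩
      · exact ⟨⟨c, hc⟩, rfl⟩
  rw [← Nat.card_congr (Equiv.ofBijective f hf), ← Finite.card_option,
    Nat.card_congr (Equiv.optionSubtypeNe _)]

lemma card_connectedComponent_bot :
    Nat.card (⊥ : SimpleGraph V).ConnectedComponent = Nat.card V :=
  (Nat.card_congr (Equiv.ofBijective _
    ⟨fun _ _ h => reachable_bot.mp (ConnectedComponent.exact h), Quot.mk_surjective⟩)).symm

end SimpleGraph

lemma Set.pair_eq_pair_iff_sym2_eq {α : Type*} {a b c d : α} :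
    ({a, b} : Set α) = {c, d} ↔ s(a, b) = s(c, d) := by
  rw [Set.pair_eq_pair_iff, Sym2.eq_iff]

section Trimming

variable {F F' : Finset E} {Y Y' : E → V × V} {e : E}

/-- The simple graph underlying the trimmed multigraph: parallel edges merged, loops dropped. -/
def trimGraph (F : Finset E) (Y : E → V × V) : SimpleGraph V :=
  fromEdgeSet ((fun e => s((Y e).1, (Y e).2)) '' F)

lemma trimGraph_mono (h : F ⊆ F') : trimGraph F Y ≤ trimGraph F' Y :=
  fromEdgeSet_mono (Set.image_mono (coe_subset.2 h))

lemma trimGraph_congr (h : ∀ e ∈ F, Y e = Y' e) : trimGraph F Y = trimGraph F Y' :=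
  congrArg fromEdgeSet (Set.image_congr fun e he => by rw [h e he])

lemma trimGraph_insert [DecidableEq E] :
    trimGraph (insert e F) Y = trimGraph F Y ⊔ edge (Y e).1 (Y e).2 := by
  rw [trimGraph, coe_insert, Set.image_insert_eq, Set.insert_eq, fromEdgeSet_union, sup_comm]
  rfl

lemma reachable_trimGraph_of_mem (he : e ∈ F) : (trimGraph F Y).Reachable (Y e).1 (Y e).2 := by
  by_cases h : (Y e).1 = (Y e).2
  · rw [h]
  · exact Adj.reachable (G := trimGraph F Y) ((fromEdgeSet_adj _).2 ⟨⟨e, he, rfl⟩, h⟩)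

lemma HasCycle.mono (h : F ⊆ F') (hc : HasCycle F Y) : HasCycle F' Y := by
  obtain ⟨k, es, vs, hmem, hinj, hstep⟩ := hc
  exact ⟨k, es, vs, fun i => h (hmem i), hinj, hstep⟩

lemma HasCycle.congr (h : ∀ e ∈ F, Y e = Y' e) (hc : HasCycle F Y) : HasCycle F Y' := by
  obtain ⟨k, es, vs, hmem, hinj, hstep⟩ := hc
  exact ⟨k, es, vs, hmem, hinj, fun i => h _ (hmem i) ▸ hstep i⟩

lemma HasCycle.of_insert [DecidableEq E] (hc : HasCycle (insert e F) Y) :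
    HasCycle F Y ∨ (trimGraph F Y).Reachable (Y e).1 (Y e).2 := by
  obtain ⟨k, es, vs, hmem, hinj, hstep⟩ := hc
  by_cases hce : ∃ i₀, es i₀ = e
  · obtain ⟨i₀, rfl⟩ := hce
    have hF : ∀ j, j ≠ i₀ → es j ∈ F := fun j hj =>
      (mem_insert.1 (hmem j)).resolve_left (hinj.ne hj)
    refine .inr ((reachable_of_forall_ne_reachable_succ vs i₀ fun j hj => ?_).of_sym2_eq
      (Set.pair_eq_pair_iff_sym2_eq.1 (hstep i₀)).symm)
    exact (reachable_trimGraph_of_mem (hF j hj)).of_sym2_eq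
      (Set.pair_eq_pair_iff_sym2_eq.1 (hstep j))
  · push Not at hce
    exact .inl ⟨k, es, vs, fun i => (mem_insert.1 (hmem i)).resolve_left (hce i), hinj, hstep⟩

lemma hasCycle_insert_of_reachable [DecidableEq E] (he : e ∉ F)
    (h : (trimGraph F Y).Reachable (Y e).1 (Y e).2) : HasCycle (insert e F) Y := by
  obtain ⟨p, hp⟩ := h.exists_isPath
  have hedge (i : Fin p.length) :
      ∃ x ∈ F, s((Y x).1, (Y x).2) = s(p.getVert i, p.getVert (i + 1)) := by
    obtain ⟨⟨x, hx, hxi⟩, -⟩ := (fromEdgeSet_adj _).1 (p.adj_getVert_succ i.2)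
    exact ⟨x, hx, hxi⟩
  choose g hgF hg using hedge
  -- the edges of a path are distinct, hence so are the hedges trimmed to them
  have hg_inj : Injective g := fun i j hij => by
    have := hg i
    rw [hij, hg j, ← p.getElem_edges (i := i) (by simp), ← p.getElem_edges (i := j) (by simp),
      hp.isTrail.edges_nodup.getElem_inj_iff] at this
    exact Fin.ext this.symm
  refine ⟨p.length, Fin.snoc g e, fun i => p.getVert i, fun i => ?_,
    Fin.snoc_injective_of_injective hg_inj ?_, fun i => ?_⟩
  · refine Fin.lastCases ?_ (fun i => ?_) i
    · simp
    · simp [hgF]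
  · rintro ⟨i, hi⟩
    exact he (hi ▸ hgF i)
  · rw [Set.pair_eq_pair_iff_sym2_eq]
    refine Fin.lastCases ?_ (fun i => ?_) i
    · simp [Fin.last_add_one, Sym2.eq_swap]
    · simpa [Fin.coeSucc_eq_succ] using hg i

lemma hasCycle_insert_iff [DecidableEq E] (he : e ∉ F) :
    HasCycle (insert e F) Y ↔ HasCycle F Y ∨ (trimGraph F Y).Reachable (Y e).1 (Y e).2 :=
  ⟨HasCycle.of_insert, fun h => h.elim (·.mono (subset_insert e F))
    (hasCycle_insert_of_reachable he)⟩

lemma not_hasCycle_insert_update [DecidableEq E] {y : V × V} (hF : ¬HasCycle F Y)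
    (hy : ¬(trimGraph F Y).Reachable y.1 y.2) : ¬HasCycle (insert e F) (update Y e y) := by
  have hagree : ∀ x ∈ F.erase e, update Y e y x = Y x := fun x hx =>
    update_of_ne (ne_of_mem_erase hx) _ _
  rw [← insert_erase (mem_insert_self e F), erase_insert_eq_erase,
    hasCycle_insert_iff (notMem_erase e F), trimGraph_congr hagree, update_self, not_or]
  exact ⟨fun h => hF ((h.congr hagree).mono (erase_subset e F)),
    fun h => hy (h.mono (trimGraph_mono (erase_subset e F)))⟩

lemma card_connectedComponent_trimGraph_add_card [Finite V] (hF : ¬HasCycle F Y) :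
    Nat.card (trimGraph F Y).ConnectedComponent + #F = Nat.card V := by
  classical
  induction F using Finset.induction_on with
  | empty => simp [trimGraph, card_connectedComponent_bot]
  | insert e F he ih =>
    rw [hasCycle_insert_iff he, not_or] at hF
    rw [trimGraph_insert, card_insert_of_notMem he, ← ih hF.1,
      ← card_connectedComponent_sup_edge hF.2, add_right_comm, add_assoc]

lemma card_le_card_of_forall_reachable [Finite V] {A B : Finset E} {YA YB : E → V × V}
    (hA : ¬HasCycle A YA) (hB : ¬HasCycle B YB)
    (h : ∀ e ∈ B, (trimGraph A YA).Reachable (YB e).1 (YB e).2) : #B ≤ #A := by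
  have hcomp : Nat.card (trimGraph A YA).ConnectedComponent ≤
      Nat.card (trimGraph B YB).ConnectedComponent :=
    card_connectedComponent_le_of_forall_adj_reachable fun x y hxy => by
      obtain ⟨⟨e, he, hexy⟩, -⟩ := (fromEdgeSet_adj _).1 hxy
      exact (h e he).of_sym2_eq hexy
  have hA := card_connectedComponent_trimGraph_add_card hA
  have hB := card_connectedComponent_trimGraph_add_card hB
  omega

variable {hedge : E → Finset (Finset V)}

lemma ValidTrim.mono (h : F ⊆ F') (hv : ValidTrim hedge F' Y) : ValidTrim hedge F Y :=
  fun e he => hv e (h he)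

lemma ValidTrim.insert_update [DecidableEq E] {B : Finset E} {YB : E → V × V}
    (hF : ValidTrim hedge F Y) (hB : ValidTrim hedge B YB) (he : e ∈ B) :
    ValidTrim hedge (insert e F) (update Y e (YB e)) := by
  intro x hx
  by_cases hxe : x = e
  · subst hxe
    simpa using hB x he
  · rw [update_of_ne hxe]
    exact hF x ((mem_insert.1 hx).resolve_left hxe)

end Trimming

theorem hedgegraph_matroid_axioms_general [Fintype V]
    [DecidableEq E] (hedge : E → Finset (Finset V)) :
    (∀ A B : Finset E, A ⊆ B → AcyclicTrimmable hedge B → AcyclicTrimmable hedge A) ∧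
      (∀ A B : Finset E, AcyclicTrimmable hedge A → AcyclicTrimmable hedge B →
        A.card < B.card → ∃ e ∈ B \ A, AcyclicTrimmable hedge (insert e A)) := by
  refine ⟨fun A B hAB ⟨Y, hv, hno⟩ => ⟨Y, hv.mono hAB, fun hc => hno (hc.mono hAB)⟩, ?_⟩
  rintro A B hA ⟨YB, hvB, hnoB⟩ hlt
  obtain ⟨YA, ⟨hvA, hnoA⟩, hmin⟩ :=
    (InvImage.wf (fun Y => #{e ∈ A ∩ B | Y e ≠ YB e}) wellFounded_lt).has_min
      {Y | ValidTrim hedge A Y ∧ ¬HasCycle A Y} hA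
  obtain ⟨e, heB, hnr⟩ : ∃ e ∈ B, ¬(trimGraph A YA).Reachable (YB e).1 (YB e).2 := by
    by_contra! h
    exact hlt.not_ge (card_le_card_of_forall_reachable hnoA hnoB h)
  have heA : e ∉ A := by
    intro heA
    have hne : YA e ≠ YB e := fun h => hnr (h ▸ reachable_trimGraph_of_mem heA)
    refine hmin (update YA e (YB e)) ⟨?_, ?_⟩
      (card_filter_update_ne_lt (mem_inter.2 ⟨heA, heB⟩) hne)
    · simpa [insert_eq_of_mem heA] using hvA.insert_update hvB heB
    · simpa [insert_eq_of_mem heA] using not_hasCycle_insert_update (e := e) hnoA hnr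
  exact ⟨e, mem_sdiff.2 ⟨heB, heA⟩, _, hvA.insert_update hvB heB,
    not_hasCycle_insert_update hnoA hnr⟩

/-- The family of hedge sets trimmable into forests satisfies the
matroid independence axioms: it is downward closed and satisfies the exchange axiom. -/
theorem hedgegraph_matroid_axioms [Fintype V] [DecidableEq V]
    [Fintype E] [DecidableEq E] (hedge : E → Finset (Finset V)) :
    (∀ A B : Finset E, A ⊆ B → AcyclicTrimmable hedge B → AcyclicTrimmable hedge A) ∧
      (∀ A B : Finset E, AcyclicTrimmable hedge A → AcyclicTrimmable hedge B →
        A.card < B.card → ∃ e ∈ B \ A, AcyclicTrimmable hedge (insert e A)) :=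
  hedgegraph_matroid_axioms_general hedge

end
end

section
/- Let G = (V, E) be a hedgegraph with connectivity λ > 0 (every nonempty proper vertex subset S has at least λ crossing hedges). Then the weak partition connectivity of G satisfies WPC_G ≥ ⌊λ/2⌋. -/
/-!
Let `P` be a partition with `k ≥ 2` parts. Every part is a nonempty proper vertex set, so at
least `λ` hedges cross it, and each crossing hedge `e` makes the part a non-isolated vertex of
`P(e)`. A graph on `k` vertices with `c` components has at most `2 (k - c)` non-isolated
vertices, so double counting gives `λ k ≤ 2 ∑ₑ (k - #Comps(P(e)))`, whence
`⌊λ/2⌋ (k - 1) ≤ ∑ₑ (k - #Comps(P(e)))`.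
-/

open Finset

attribute [local instance] Classical.propDecidable

noncomputable section

variable {V E : Type*}

/-- Hedges crossing the vertex set `S`. -/
def vertexCut [Fintype V] [DecidableEq V] [Fintype E]
    (hedge : E → Finset (Finset V)) (S : Finset V) : Finset E :=
  univ.filter fun e => ∃ h ∈ hedge e, (h ∩ S).Nonempty ∧ (h ∩ (univ \ S)).Nonempty

/-- Connectivity of the hedgegraph: the minimum size of `δ(S)` over nonempty proper
vertex sets `S`. -/
def hconnectivity [Fintype V] [DecidableEq V] [Fintype E]
    (hedge : E → Finset (Finset V)) : ℕ :=
  sInf {k | ∃ S : Finset V, S.Nonempty ∧ S ≠ univ ∧ k = (vertexCut hedge S).card}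

/-- The contraction of the one-hedge hedgegraph `(V,{e})` along the partition `P`: the
graph on the parts of `P`, two parts being adjacent if some hyperedge of `e` meets
both. -/
def contractGraph [Fintype V] [DecidableEq V] (hedge : E → Finset (Finset V)) (e : E)
    (P : Finpartition (univ : Finset V)) : SimpleGraph {p // p ∈ P.parts} where
  Adj p q := p ≠ q ∧ ∃ h ∈ hedge e, (h ∩ p.1).Nonempty ∧ (h ∩ q.1).Nonempty
  symm := by constructor; rintro p q ⟨hne, h, hh, hp, hq⟩; exact ⟨hne.symm, h, hh, hq, hp⟩
  loopless := by constructor; rintro p ⟨hne, -⟩; exact hne rfl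

/-- `#Comps(P(e))`: number of connected components of the contraction of `(V,{e})`
along `P`. -/
def compsContract [Fintype V] [DecidableEq V] (hedge : E → Finset (Finset V)) (e : E)
    (P : Finpartition (univ : Finset V)) : ℕ :=
  Nat.card (contractGraph hedge e P).ConnectedComponent

/-- Weak partition connectivity. -/
def wpc [Fintype V] [DecidableEq V] [Fintype E] (hedge : E → Finset (Finset V)) : ℕ :=
  sInf {k | ∃ P : Finpartition (univ : Finset V), 2 ≤ P.parts.card ∧
    k = (∑ e : E, (P.parts.card - compsContract hedge e P)) / (P.parts.card - 1)}

namespace SimpleGraph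

variable {α : Type*} [Fintype α]

/-- A component containing a non-isolated vertex has at least two vertices, an isolated one
exactly one; summing over the components gives the bound. -/
theorem card_nonisolated_le_two_mul_card_sub_card_connectedComponent (G : SimpleGraph α) :
    #{v | ∃ w, G.Adj v w} ≤ 2 * (Fintype.card α - Nat.card G.ConnectedComponent) := by
  set N : Finset α := {v | ∃ w, G.Adj v w}
  have hN : #N = ∑ c : G.ConnectedComponent, #{v ∈ N | G.connectedComponentMk v = c} :=
    card_eq_sum_card_fiberwise fun _ _ => mem_univ _
  have hV : Fintype.card α = ∑ c : G.ConnectedComponent, #{v | G.connectedComponentMk v = c} :=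
    card_eq_sum_card_fiberwise fun _ _ => mem_univ _
  have hfiber : ∀ c : G.ConnectedComponent,
      #{v ∈ N | G.connectedComponentMk v = c} + 2 ≤ 2 * #{v | G.connectedComponentMk v = c} := by
    intro c
    have hsub : #{v ∈ N | G.connectedComponentMk v = c} ≤ #{v | G.connectedComponentMk v = c} :=
      card_le_card fun v hv => by simp_all
    by_cases hc : ∃ v ∈ N, G.connectedComponentMk v = c
    · obtain ⟨v, hv, rfl⟩ := hc
      obtain ⟨w, hvw⟩ := (mem_filter.mp hv).2
      have htwo : 1 < #{u | G.connectedComponentMk u = G.connectedComponentMk v} :=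
        one_lt_card.mpr ⟨v, by simp, w, by simpa using hvw.reachable.symm, hvw.ne⟩
      omega
    · have hempty : #{v ∈ N | G.connectedComponentMk v = c} = 0 :=
        card_eq_zero.mpr (filter_eq_empty_iff.mpr fun v hv hvc => hc ⟨v, hv, hvc⟩)
      obtain ⟨v, hv⟩ := c.exists_rep
      have hone : 0 < #{u | G.connectedComponentMk u = c} :=
        card_pos.mpr ⟨v, mem_filter.mpr ⟨mem_univ v, hv⟩⟩
      omega
  have hsum : #N + 2 * Nat.card G.ConnectedComponent ≤ 2 * Fintype.card α := by
    rw [hN, hV, Nat.card_eq_fintype_card, ← card_univ, mul_sum, card_eq_sum_ones, mul_sum,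
      ← sum_add_distrib]
    exact sum_le_sum fun c _ => by simpa using hfiber c
  omega

end SimpleGraph

theorem Finpartition.ne_of_mem_parts {α : Type*} [DecidableEq α] {s : Finset α}
    {P : Finpartition s} (hP : 2 ≤ #P.parts) {p : Finset α} (hp : p ∈ P.parts) : p ≠ s := by
  rintro rfl
  obtain ⟨q, hq, hqp⟩ := exists_mem_ne hP p
  obtain ⟨w, hw⟩ := P.nonempty_of_mem_parts hq
  exact hqp (P.eq_of_mem_parts hq hp hw (P.le hq hw))

section Hedgegraph

variable [Fintype V] [DecidableEq V] [Fintype E] (hedge : E → Finset (Finset V))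

theorem hconnectivity_le_card_vertexCut {S : Finset V} (hS : S.Nonempty) (hSV : S ≠ univ) :
    hconnectivity hedge ≤ #(vertexCut hedge S) :=
  Nat.sInf_le ⟨S, hS, hSV, rfl⟩

theorem one_lt_card_of_hconnectivity_pos (hl : 0 < hconnectivity hedge) :
    1 < Fintype.card V := by
  by_contra! hV
  have hcuts : {k | ∃ S : Finset V, S.Nonempty ∧ S ≠ univ ∧ k = #(vertexCut hedge S)} = ∅ := by
    refine Set.eq_empty_of_forall_notMem fun k ⟨S, hS, hSV, _⟩ => hSV ?_
    obtain ⟨v, hv⟩ := hS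
    exact eq_univ_of_forall fun w => Fintype.card_le_one_iff.mp hV v w ▸ hv
  simp [hconnectivity, hcuts] at hl

theorem vertexCut_subset_nonisolated (P : Finpartition (univ : Finset V))
    (p : {p // p ∈ P.parts}) :
    vertexCut hedge p.1 ⊆ ({e | ∃ q, (contractGraph hedge e P).Adj p q} : Finset E) := by
  intro e he
  simp only [vertexCut, mem_filter, mem_univ, true_and] at he ⊢
  obtain ⟨h, hh, hp, w, hw⟩ := he
  rw [mem_inter, mem_sdiff] at hw
  obtain ⟨t, ht, hwt⟩ := P.exists_mem (mem_univ w)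
  exact ⟨⟨t, ht⟩, fun hpt => hw.2.2 (hpt ▸ hwt), h, hh, hp, w, mem_inter.mpr ⟨hw.1, hwt⟩⟩

theorem hconnectivity_mul_card_parts_le {P : Finpartition (univ : Finset V)}
    (hP : 2 ≤ #P.parts) :
    hconnectivity hedge * #P.parts ≤ 2 * ∑ e, (#P.parts - compsContract hedge e P) := by
  let r : {p // p ∈ P.parts} → E → Prop := fun p e => ∃ q, (contractGraph hedge e P).Adj p q
  have hparts : Fintype.card {p // p ∈ P.parts} = #P.parts := Fintype.card_coe _
  calc hconnectivity hedge * #P.parts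
      = ∑ _p : {p // p ∈ P.parts}, hconnectivity hedge := by
        rw [sum_const, card_univ, hparts, smul_eq_mul, mul_comm]
    _ ≤ ∑ p, #(univ.bipartiteAbove r p) := sum_le_sum fun p _ =>
        (hconnectivity_le_card_vertexCut hedge (P.nonempty_of_mem_parts p.2)
          (Finpartition.ne_of_mem_parts hP p.2)).trans
          (card_le_card (vertexCut_subset_nonisolated hedge P p))
    _ = ∑ e, #(univ.bipartiteBelow r e) := sum_card_bipartiteAbove_eq_sum_card_bipartiteBelow r
    _ ≤ ∑ e, 2 * (#P.parts - compsContract hedge e P) := sum_le_sum fun e _ => by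
        have h := SimpleGraph.card_nonisolated_le_two_mul_card_sub_card_connectedComponent
          (contractGraph hedge e P)
        rw [hparts] at h
        exact h
    _ = 2 * ∑ e, (#P.parts - compsContract hedge e P) := (mul_sum ..).symm

theorem hconnectivity_div_two_le_of_card_parts {P : Finpartition (univ : Finset V)}
    (hP : 2 ≤ #P.parts) :
    hconnectivity hedge / 2 ≤
      (∑ e, (#P.parts - compsContract hedge e P)) / (#P.parts - 1) := by
  have hmul := hconnectivity_mul_card_parts_le hedge hP
  rw [Nat.le_div_iff_mul_le (by omega)]
  refine Nat.le_of_mul_le_mul_left ?_ two_pos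
  calc 2 * (hconnectivity hedge / 2 * (#P.parts - 1))
      ≤ hconnectivity hedge * #P.parts := by
        rw [← mul_assoc, mul_comm 2]
        exact Nat.mul_le_mul (Nat.div_mul_le_self _ 2) (Nat.sub_le _ 1)
    _ ≤ _ := hmul

end Hedgegraph

theorem wpc_ge_half_connectivity_general [Fintype V] [DecidableEq V]
    [Fintype E] (hedge : E → Finset (Finset V)) :
    hconnectivity hedge / 2 ≤ wpc hedge := by
  obtain hl | hl := (hconnectivity hedge).eq_zero_or_pos
  · simp [hl]
  refine le_csInf ⟨_, ⊥, ?_, rfl⟩ ?_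
  · rw [Finpartition.card_bot, card_univ]
    exact one_lt_card_of_hconnectivity_pos hedge hl
  · rintro _ ⟨P, hP, rfl⟩
    exact hconnectivity_div_two_le_of_card_parts hedge hP

/-- For a hedgegraph with connectivity `λ > 0`, the weak partition
connectivity satisfies `WPC ≥ ⌊λ/2⌋`. -/
theorem wpc_ge_half_connectivity [Fintype V] [DecidableEq V]
    [Fintype E] [DecidableEq E] (hedge : E → Finset (Finset V))
    (hl : 0 < hconnectivity hedge) :
    hconnectivity hedge / 2 ≤ wpc hedge :=
  wpc_ge_half_connectivity_general hedge

end
end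

section
/- Let f: 2^N → ℤ≥0 be a polymatroid (monotone, submodular, f(∅)=0) with r := f(N) ≥ 2 and functional strength k*(f) := min over A with f(A) < f(N) of ⌊ Σ_{e∈N}(f(A∪{e}) − f(A)) / (f(N) − f(A)) ⌋. If each element of N is independently included in a random set S with probability at least p := min{1, 10 log r / k*(f)}, then P[f(S) = f(N)] ≥ 1 − 1/r. -/
/-!
Sample in `T ≈ 2 log r` independent rounds, each element with probability `q = p / T` per round.
In one round the expected deficit `r - f(A ∪ S)` shrinks by the factor `1 + q k*`: submodularity
makes the expected gain at least `q` times the expected total marginal, which by the definition of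
`k*` is at least `k*` times the deficit. After `T` rounds the expected deficit is at most
`r / (1 + q k*)^T ≤ r / e^T ≤ 1 / r`; since `f` is integer-valued, a non-base has deficit at
least `1`, and the union of the rounds is dominated by sampling with probability `p`.
-/

open Finset

section BernoulliExpect

variable {N : Type*} [DecidableEq N]

/-- Expectation of `g S` when each `e ∈ u` lies in `S` independently with probability `w e`. -/
def bernoulliExpect (u : Finset N) (w : N → ℝ) (g : Finset N → ℝ) : ℝ :=
  ∑ S ∈ u.powerset, (∏ e ∈ S, w e) * (∏ e ∈ u \ S, (1 - w e)) * g S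

@[simp]
lemma bernoulliExpect_empty (w : N → ℝ) (g : Finset N → ℝ) :
    bernoulliExpect ∅ w g = g ∅ := by
  simp [bernoulliExpect]

lemma bernoulliExpect_insert {u : Finset N} {x : N} (hx : x ∉ u) (w : N → ℝ)
    (g : Finset N → ℝ) :
    bernoulliExpect (insert x u) w g
      = w x * bernoulliExpect u w (fun S => g (insert x S))
        + (1 - w x) * bernoulliExpect u w g := by
  rw [bernoulliExpect, sum_powerset_insert hx, bernoulliExpect, bernoulliExpect, mul_sum, mul_sum,
    add_comm]
  congr 1 <;> refine sum_congr rfl fun S hS => ?_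
  · have hxS : x ∉ S := fun h => hx (mem_powerset.1 hS h)
    rw [insert_sdiff_insert, sdiff_insert_of_notMem hx, prod_insert hxS]
    ring
  · have hxS : x ∉ S := fun h => hx (mem_powerset.1 hS h)
    rw [insert_sdiff_of_notMem _ hxS, prod_insert (by simp [hx])]
    ring

lemma bernoulliExpect_insert_union {u : Finset N} {x : N} (hx : x ∉ u) (w : N → ℝ)
    (g : Finset N → ℝ) (A : Finset N) :
    bernoulliExpect (insert x u) w (fun S => g (A ∪ S))
      = w x * bernoulliExpect u w (fun S => g (insert x (A ∪ S)))
        + (1 - w x) * bernoulliExpect u w (fun S => g (A ∪ S)) := by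
  simp only [bernoulliExpect_insert hx, union_insert]

lemma bernoulliExpect_add (u : Finset N) (w : N → ℝ) (g h : Finset N → ℝ) :
    bernoulliExpect u w (fun S => g S + h S) = bernoulliExpect u w g + bernoulliExpect u w h := by
  simp only [bernoulliExpect, mul_add, sum_add_distrib]

lemma bernoulliExpect_const_mul (u : Finset N) (w : N → ℝ) (c : ℝ) (g : Finset N → ℝ) :
    bernoulliExpect u w (fun S => c * g S) = c * bernoulliExpect u w g := by
  simp only [bernoulliExpect, mul_sum]
  exact sum_congr rfl fun S _ => by ring

lemma bernoulliExpect_sub (u : Finset N) (w : N → ℝ) (g h : Finset N → ℝ) :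
    bernoulliExpect u w (fun S => g S - h S) = bernoulliExpect u w g - bernoulliExpect u w h := by
  simp only [bernoulliExpect, mul_sub, sum_sub_distrib]

lemma bernoulliExpect_sum {ι : Type*} (u : Finset N) (w : N → ℝ) (t : Finset ι)
    (G : ι → Finset N → ℝ) :
    bernoulliExpect u w (fun S => ∑ i ∈ t, G i S) = ∑ i ∈ t, bernoulliExpect u w (G i) := by
  simp only [bernoulliExpect, mul_sum]
  exact sum_comm

@[simp]
lemma bernoulliExpect_const (u : Finset N) (w : N → ℝ) (c : ℝ) :
    bernoulliExpect u w (fun _ => c) = c := by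
  rw [bernoulliExpect, ← sum_mul, ← prod_add]
  simp

@[simp]
lemma bernoulliExpect_zero (u : Finset N) (g : Finset N → ℝ) :
    bernoulliExpect u (fun _ => 0) g = g ∅ := by
  induction u using Finset.induction_on with
  | empty => simp
  | insert x u hx ih => simp [bernoulliExpect_insert hx, ih]

@[simp]
lemma bernoulliExpect_one (u : Finset N) (g : Finset N → ℝ) :
    bernoulliExpect u (fun _ => 1) g = g u := by
  induction u using Finset.induction_on generalizing g with
  | empty => simp
  | insert x u hx ih => simp [bernoulliExpect_insert hx, ih]

lemma bernoulliExpect_mono {u : Finset N} {w : N → ℝ} (hw : ∀ e ∈ u, w e ∈ Set.Icc 0 1)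
    {g h : Finset N → ℝ} (hgh : ∀ S ⊆ u, g S ≤ h S) :
    bernoulliExpect u w g ≤ bernoulliExpect u w h := by
  refine sum_le_sum fun S hS => mul_le_mul_of_nonneg_left (hgh S (mem_powerset.1 hS)) ?_
  have hSu := mem_powerset.1 hS
  exact mul_nonneg (prod_nonneg fun e he => (hw e (hSu he)).1)
    (prod_nonneg fun e he => sub_nonneg.2 (hw e (mem_sdiff.1 he).1).2)

lemma bernoulliExpect_le_of_monotone {u : Finset N} {w v : N → ℝ} (hw : ∀ e ∈ u, 0 ≤ w e)
    (hwv : ∀ e ∈ u, w e ≤ v e) (hv : ∀ e ∈ u, v e ≤ 1) {g : Finset N → ℝ}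
    (hg : Monotone g) :
    bernoulliExpect u w g ≤ bernoulliExpect u v g := by
  induction u using Finset.induction_on generalizing g with
  | empty => simp
  | insert x u hx ih =>
    simp only [forall_mem_insert] at hw hwv hv
    have hg_ins : Monotone fun S => g (insert x S) := fun S T hST => hg (insert_subset_insert x hST)
    have hv_ins : bernoulliExpect u v g ≤ bernoulliExpect u v (fun S => g (insert x S)) :=
      bernoulliExpect_mono (fun e he => ⟨(hw.2 e he).trans (hwv.2 e he), hv.2 e he⟩)
        fun S _ => hg (subset_insert x S)
    rw [bernoulliExpect_insert hx, bernoulliExpect_insert hx]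
    nlinarith [ih hw.2 hwv.2 hv.2 hg_ins, ih hw.2 hwv.2 hv.2 hg,
      mul_nonneg hw.1 (sub_nonneg.2 hwv.1)]

lemma bernoulliExpect_union (u : Finset N) (w w' : N → ℝ) (g : Finset N → ℝ) :
    bernoulliExpect u w (fun S => bernoulliExpect u w' (fun S' => g (S ∪ S')))
      = bernoulliExpect u (fun e => 1 - (1 - w e) * (1 - w' e)) g := by
  induction u using Finset.induction_on generalizing g with
  | empty => simp
  | insert x u hx ih =>
    have h_ins : ∀ S, bernoulliExpect (insert x u) w' (fun S' => g (insert x S ∪ S'))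
        = bernoulliExpect u w' (fun S' => g (insert x (S ∪ S'))) := fun S => by
      rw [bernoulliExpect_insert_union hx]
      simp only [insert_union, insert_idem]
      ring
    rw [bernoulliExpect_insert hx (w := w)]
    simp only [h_ins]
    simp only [bernoulliExpect_insert_union hx, bernoulliExpect_add, bernoulliExpect_const_mul]
    rw [ih (fun T => g (insert x T)), ih g, bernoulliExpect_insert hx]
    ring

lemma sum_filter_prod_mul_prod_compl [Fintype N] (p : N → ℝ) (P : Finset N → Prop)
    [DecidablePred P] :
    ∑ S ∈ univ.filter P, (∏ e ∈ S, p e) * ∏ e ∈ Sᶜ, (1 - p e)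
      = bernoulliExpect univ p (fun S => if P S then 1 else 0) := by
  rw [sum_filter, bernoulliExpect, powerset_univ]
  refine sum_congr rfl fun S _ => ?_
  rw [compl_eq_univ_sdiff]
  split_ifs <;> simp

end BernoulliExpect

lemma one_sub_one_sub_pow_mem_Icc {q : ℝ} (hq : q ∈ Set.Icc 0 1) (t : ℕ) :
    1 - (1 - q) ^ t ∈ Set.Icc (0 : ℝ) 1 :=
  ⟨sub_nonneg.2 (pow_le_one₀ (sub_nonneg.2 hq.2) (by linarith [hq.1])),
    sub_le_self _ (pow_nonneg (sub_nonneg.2 hq.2) t)⟩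

section AntitoneMarginals

variable {N : Type*} [DecidableEq N] {g : Finset N → ℝ}

lemma sub_le_sum_marginal (hg : ∀ e, Antitone fun A => g (insert e A) - g A) (A u : Finset N) :
    g (A ∪ u) - g A ≤ ∑ e ∈ u, (g (insert e A) - g A) := by
  induction u using Finset.induction_on with
  | empty => simp
  | insert x u hx ih =>
    rw [sum_insert hx, union_insert]
    linarith [hg x (subset_union_left : A ⊆ A ∪ u)]

lemma add_sum_marginal_le_bernoulliExpect (hg : ∀ e, Antitone fun A => g (insert e A) - g A)
    {u : Finset N} {w : N → ℝ} (hw : ∀ e ∈ u, w e ∈ Set.Icc 0 1) (A : Finset N) :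
    g A + ∑ e ∈ u, w e * bernoulliExpect u w (fun S => g (insert e (A ∪ S)) - g (A ∪ S))
      ≤ bernoulliExpect u w (fun S => g (A ∪ S)) := by
  induction u using Finset.induction_on generalizing A with
  | empty => simp
  | insert x u hx ih =>
    obtain ⟨hx0, hx1⟩ := hw x (mem_insert_self x u)
    have hw_u : ∀ e ∈ u, w e ∈ Set.Icc 0 1 := fun e he => hw e (mem_insert_of_mem he)
    have h_marg : ∀ e,
        bernoulliExpect (insert x u) w (fun S => g (insert e (A ∪ S)) - g (A ∪ S))
        = w x * bernoulliExpect u w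
            (fun S => g (insert e (insert x (A ∪ S))) - g (insert x (A ∪ S)))
          + (1 - w x) * bernoulliExpect u w (fun S => g (insert e (A ∪ S)) - g (A ∪ S)) :=
      fun e => bernoulliExpect_insert_union hx w (fun B => g (insert e B) - g B) A
    have h_marg_x : bernoulliExpect (insert x u) w (fun S => g (insert x (A ∪ S)) - g (A ∪ S))
        ≤ g (insert x A) - g A :=
      (bernoulliExpect_mono hw fun S _ => hg x subset_union_left).trans_eq
        (bernoulliExpect_const _ _ _)
    have ih_x := ih hw_u (insert x A)
    simp only [insert_union] at ih_x
    have h_sum : ∑ e ∈ u, w e * bernoulliExpect (insert x u) w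
          (fun S => g (insert e (A ∪ S)) - g (A ∪ S))
        = w x * ∑ e ∈ u, w e * bernoulliExpect u w
            (fun S => g (insert e (insert x (A ∪ S))) - g (insert x (A ∪ S)))
          + (1 - w x) * ∑ e ∈ u, w e * bernoulliExpect u w
            (fun S => g (insert e (A ∪ S)) - g (A ∪ S)) := by
      simp only [h_marg, mul_sum, ← sum_add_distrib]
      exact sum_congr rfl fun e _ => by ring
    rw [sum_insert hx, h_sum, bernoulliExpect_insert_union hx]
    linarith [mul_le_mul_of_nonneg_left ih_x hx0,
      mul_le_mul_of_nonneg_left (ih hw_u A) (sub_nonneg.2 hx1),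
      mul_le_mul_of_nonneg_left h_marg_x hx0]

variable [Fintype N] {k R q : ℝ}

lemma one_add_mul_mul_bernoulliExpect_deficit_le
    (hg : ∀ e, Antitone fun A => g (insert e A) - g A)
    (hkR : ∀ B, k * (R - g B) ≤ ∑ e, (g (insert e B) - g B)) (hq : q ∈ Set.Icc 0 1)
    (A : Finset N) :
    (1 + q * k) * bernoulliExpect univ (fun _ => q) (fun S => R - g (A ∪ S)) ≤ R - g A := by
  have h_gain := add_sum_marginal_le_bernoulliExpect hg (u := univ) (fun _ _ => hq) A
  have h_strength : k * (R - bernoulliExpect univ (fun _ => q) (fun S => g (A ∪ S)))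
      ≤ ∑ e, bernoulliExpect univ (fun _ => q)
          (fun S => g (insert e (A ∪ S)) - g (A ∪ S)) := by
    rw [← bernoulliExpect_sum, ← bernoulliExpect_const (univ : Finset N) (fun _ => q) R,
      ← bernoulliExpect_sub, ← bernoulliExpect_const_mul]
    exact bernoulliExpect_mono (fun _ _ => hq) fun S _ => hkR (A ∪ S)
  rw [← mul_sum] at h_gain
  rw [bernoulliExpect_sub, bernoulliExpect_const]
  linarith [mul_le_mul_of_nonneg_left h_strength hq.1]

lemma pow_mul_bernoulliExpect_deficit_le (hg : ∀ e, Antitone fun A => g (insert e A) - g A)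
    (hk : 0 ≤ k) (hkR : ∀ B, k * (R - g B) ≤ ∑ e, (g (insert e B) - g B))
    (hq : q ∈ Set.Icc 0 1) (t : ℕ) :
    (1 + q * k) ^ t * bernoulliExpect univ (fun _ => 1 - (1 - q) ^ t) (fun S => R - g S)
      ≤ R - g ∅ := by
  induction t with
  | zero => simp
  | succ t ih =>
    have h_union := bernoulliExpect_union univ (fun _ => 1 - (1 - q) ^ t) (fun _ => q)
      (fun S => R - g S)
    have h_prob : (fun _ : N => 1 - (1 - (1 - (1 - q) ^ t)) * (1 - q))
        = fun _ => 1 - (1 - q) ^ (t + 1) := by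
      funext; ring
    rw [h_prob] at h_union
    calc (1 + q * k) ^ (t + 1) * bernoulliExpect univ (fun _ => 1 - (1 - q) ^ (t + 1))
            (fun S => R - g S)
        = (1 + q * k) ^ t * bernoulliExpect univ (fun _ => 1 - (1 - q) ^ t) (fun S =>
            (1 + q * k) * bernoulliExpect univ (fun _ => q) (fun S' => R - g (S ∪ S'))) := by
          rw [bernoulliExpect_const_mul, h_union, pow_succ, mul_assoc]
      _ ≤ (1 + q * k) ^ t * bernoulliExpect univ (fun _ => 1 - (1 - q) ^ t)
            (fun S => R - g S) := by
          gcongr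
          · exact pow_nonneg (add_nonneg zero_le_one (mul_nonneg hq.1 hk)) t
          · exact bernoulliExpect_mono (fun _ _ => one_sub_one_sub_pow_mem_Icc hq t) fun S _ =>
              one_add_mul_mul_bernoulliExpect_deficit_le hg hkR hq S
      _ ≤ R - g ∅ := ih

end AntitoneMarginals

section BaseIndicator

variable {N : Type*} [Fintype N] {f : Finset N → ℕ}

lemma monotone_ite_eq_univ (hmono : Monotone f) :
    Monotone fun S => if f S = f univ then (1 : ℝ) else 0 := by
  intro S T hST
  have h_ST := hmono hST
  have h_T := hmono (subset_univ T)
  simp only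
  split_ifs <;> norm_num
  omega

lemma one_sub_rank_deficit_le_ite (hmono : Monotone f) (S : Finset N) :
    1 - ((f univ : ℝ) - f S) ≤ if f S = f univ then 1 else 0 := by
  split_ifs with h
  · simp [h]
  · have h_lt : f S + 1 ≤ f univ := lt_of_le_of_ne (hmono (subset_univ S)) h
    have h_lt_real : (f S : ℝ) + 1 ≤ f univ := by exact_mod_cast h_lt
    linarith

end BaseIndicator

section Polymatroid

variable {N : Type*} [DecidableEq N] {f : Finset N → ℕ}

lemma antitone_marginal (hmono : Monotone f)
    (hsub : ∀ A B : Finset N, f (A ∪ B) + f (A ∩ B) ≤ f A + f B) (e : N) :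
    Antitone fun A => (f (insert e A) : ℝ) - f A := by
  intro A B hAB
  have h_sub := hsub (insert e A) B
  rw [insert_union, union_eq_right.2 hAB] at h_sub
  have h_inter := hmono (subset_inter (subset_insert e A) hAB)
  have h_nat : f (insert e B) + f A ≤ f (insert e A) + f B := by omega
  have h_real : (f (insert e B) : ℝ) + f A ≤ f (insert e A) + f B := by exact_mod_cast h_nat
  simp only
  linarith

variable [Fintype N]

noncomputable def functionalStrength (f : Finset N → ℕ) : ℕ :=
  sInf {k | ∃ A : Finset N, f A < f Finset.univ ∧
    k = (∑ e : N, (f (insert e A) - f A)) / (f Finset.univ - f A)}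

lemma cast_sum_marginal (hmono : Monotone f) (B : Finset N) :
    ((∑ e, (f (insert e B) - f B) : ℕ) : ℝ) = ∑ e, ((f (insert e B) : ℝ) - f B) := by
  rw [Nat.cast_sum]
  exact sum_congr rfl fun e _ => Nat.cast_sub (hmono (subset_insert e B))

lemma functionalStrength_mul_le (hmono : Monotone f) (B : Finset N) :
    (functionalStrength f : ℝ) * (f univ - f B) ≤ ∑ e, ((f (insert e B) : ℝ) - f B) := by
  rw [← cast_sum_marginal hmono]
  rcases (hmono (subset_univ B)).lt_or_eq with hB | hB
  · have h_le : functionalStrength f ≤ (∑ e, (f (insert e B) - f B)) / (f univ - f B) :=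
      Nat.sInf_le ⟨B, hB, rfl⟩
    rw [Nat.le_div_iff_mul_le (by omega)] at h_le
    rw [← Nat.cast_sub hB.le]
    exact_mod_cast h_le
  · rw [hB, sub_self, mul_zero]
    positivity

lemma one_le_functionalStrength (hmono : Monotone f)
    (hsub : ∀ A B : Finset N, f (A ∪ B) + f (A ∩ B) ≤ f A + f B) {A : Finset N}
    (hA : f A < f univ) : 1 ≤ functionalStrength f := by
  obtain ⟨B, hB, hkB⟩ : functionalStrength f ∈ _ := Nat.sInf_mem ⟨_, A, hA, rfl⟩
  rw [hkB, Nat.le_div_iff_mul_le (by omega), one_mul]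
  have h_real :=
    sub_le_sum_marginal (g := fun A => (f A : ℝ)) (antitone_marginal hmono hsub) B univ
  rw [union_eq_right.2 (subset_univ B), ← cast_sum_marginal hmono, ← Nat.cast_sub hB.le]
    at h_real
  exact_mod_cast h_real

lemma one_sub_div_pow_le_bernoulliExpect_base (hmono : Monotone f)
    (hsub : ∀ A B : Finset N, f (A ∪ B) + f (A ∩ B) ≤ f A + f B) {q : ℝ}
    (hq : q ∈ Set.Icc 0 1) (t : ℕ) :
    1 - f univ / (1 + q * functionalStrength f) ^ t
      ≤ bernoulliExpect univ (fun _ => 1 - (1 - q) ^ t)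
          (fun S => if f S = f univ then 1 else 0) := by
  have h_pos : 0 < (1 + q * functionalStrength f) ^ t :=
    pow_pos (add_pos_of_pos_of_nonneg one_pos (mul_nonneg hq.1 (Nat.cast_nonneg _))) t
  have h_deficit := pow_mul_bernoulliExpect_deficit_le (antitone_marginal hmono hsub)
    (Nat.cast_nonneg _) (functionalStrength_mul_le hmono) hq t
  calc 1 - f univ / (1 + q * functionalStrength f) ^ t
      ≤ 1 - bernoulliExpect univ (fun _ => 1 - (1 - q) ^ t) (fun S => (f univ : ℝ) - f S) := by
        rw [sub_le_sub_iff_left, le_div_iff₀' h_pos]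
        linarith [(f ∅).cast_nonneg (α := ℝ)]
    _ = bernoulliExpect univ (fun _ => 1 - (1 - q) ^ t) (fun S => 1 - ((f univ : ℝ) - f S)) := by
        simp only [bernoulliExpect_sub, bernoulliExpect_const]
    _ ≤ bernoulliExpect univ (fun _ => 1 - (1 - q) ^ t)
          (fun S => if f S = f univ then 1 else 0) :=
        bernoulliExpect_mono (fun _ _ => one_sub_one_sub_pow_mem_Icc hq t) fun S _ =>
          one_sub_rank_deficit_le_ite hmono S

end Polymatroid

lemma exists_round_schedule {r k : ℝ} (hr : 2 ≤ r) (hk : 0 < k)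
    (hlt : 10 * Real.log r / k < 1) :
    ∃ (T : ℕ) (q : ℝ), q ∈ Set.Icc 0 1 ∧ 1 - (1 - q) ^ T ≤ 10 * Real.log r / k ∧
      r / (1 + q * k) ^ T ≤ 1 / r := by
  set L := Real.log r
  have hL : 0.6931471803 < L := Real.log_two_gt_d9.trans_le (Real.log_le_log two_pos hr)
  set T := ⌈2 * L⌉₊
  have hT_ge : 2 * L ≤ T := Nat.le_ceil _
  have hT_lt : (T : ℝ) < 2 * L + 1 := Nat.ceil_lt_add_one (by linarith)
  have hT_pos : (0 : ℝ) < T := by linarith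
  have hTq : T * (10 * L / k / T) = 10 * L / k := by field_simp
  have hqk : 10 * L / k / T * k = 10 * L / T := by field_simp
  have hq1 : 10 * L / k / T ≤ 1 := by
    rw [div_le_one hT_pos]
    linarith
  refine ⟨T, 10 * L / k / T, ⟨by positivity, hq1⟩, ?_, ?_⟩
  · have h_bernoulli := one_add_mul_le_pow (a := -(10 * L / k / T)) (by linarith) T
    rw [mul_neg, hTq, ← sub_eq_add_neg, ← sub_eq_add_neg] at h_bernoulli
    linarith
  · -- `(e - 1) (2 L + 1) ≤ 10 L` as soon as `L ≥ log 2`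
    have h_e : Real.exp 1 ≤ 1 + 10 * L / T := by
      rw [← sub_le_iff_le_add', le_div_iff₀ hT_pos]
      nlinarith [Real.exp_one_lt_d9]
    have h_pow : r ^ 2 ≤ (1 + 10 * L / k / T * k) ^ T := calc
      r ^ 2 = Real.exp (2 * L) := by
          rw [mul_comm, Real.exp_mul, Real.exp_log (by linarith)]; norm_cast
      _ ≤ Real.exp T := Real.exp_le_exp.2 hT_ge
      _ = Real.exp 1 ^ T := by rw [← Real.exp_nat_mul, mul_one]
      _ ≤ (1 + 10 * L / k / T * k) ^ T := by
          rw [hqk]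
          gcongr
    rw [hqk] at h_pow ⊢
    rw [div_le_div_iff₀ (lt_of_lt_of_le (by positivity) h_pow) (by linarith)]
    nlinarith

/-- For a polymatroid `f` with `r = f(N) ≥ 2`, independently sampling
each element with probability at least `min 1 (10 log r / k*(f))` yields a base with
probability at least `1 - 1/r`. Sampling is modeled by the product Bernoulli
distribution over subsets `S ⊆ N`. -/
theorem polymatroid_sampling_base {N : Type*} [Fintype N] [DecidableEq N]
    (f : Finset N → ℕ)
    (hmono : ∀ A B : Finset N, A ⊆ B → f A ≤ f B)
    (hsub : ∀ A B : Finset N, f (A ∪ B) + f (A ∩ B) ≤ f A + f B)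
    (hempty : f ∅ = 0)
    (hr : 2 ≤ f Finset.univ)
    (kstar : ℕ)
    (hk : kstar = sInf {k | ∃ A : Finset N, f A < f Finset.univ ∧
      k = (∑ e : N, (f (insert e A) - f A)) / (f Finset.univ - f A)})
    (p : N → ℝ)
    (hp1 : ∀ e, p e ≤ 1)
    (hpge : ∀ e, min 1 (10 * Real.log (f Finset.univ) / (kstar : ℝ)) ≤ p e) :
    1 - 1 / (f Finset.univ : ℝ) ≤
      ∑ S ∈ (Finset.univ : Finset (Finset N)).filter (fun S => f S = f Finset.univ),
        (∏ e ∈ S, p e) * ∏ e ∈ Sᶜ, (1 - p e) := by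
  obtain rfl : kstar = functionalStrength f := hk
  have hr_real : (2 : ℝ) ≤ f univ := by exact_mod_cast hr
  rw [sum_filter_prod_mul_prod_compl]
  rcases le_or_gt 1 (10 * Real.log (f univ) / functionalStrength f) with hbig | hsmall
  · have hp : p = fun _ => 1 :=
      funext fun e => le_antisymm (hp1 e) (by simpa [min_eq_left hbig] using hpge e)
    simp only [hp, bernoulliExpect_one, if_true]
    linarith [one_div_pos.2 (by linarith : (0 : ℝ) < f univ)]
  · have hk1 : (1 : ℝ) ≤ functionalStrength f := by
      exact_mod_cast one_le_functionalStrength hmono hsub (A := ∅) (by omega)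
    obtain ⟨T, q, hq, hqT, h_rounds⟩ := exists_round_schedule hr_real (by linarith) hsmall
    calc 1 - 1 / (f univ : ℝ)
        ≤ 1 - f univ / (1 + q * functionalStrength f) ^ T := sub_le_sub_left h_rounds 1
      _ ≤ bernoulliExpect univ (fun _ => 1 - (1 - q) ^ T)
            (fun S => if f S = f univ then 1 else 0) :=
          one_sub_div_pow_le_bernoulliExpect_base hmono hsub hq T
      _ ≤ bernoulliExpect univ p (fun S => if f S = f univ then 1 else 0) :=
          bernoulliExpect_le_of_monotone (fun _ _ => (one_sub_one_sub_pow_mem_Icc hq T).1)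
            (fun e _ => hqT.trans (by simpa [min_eq_right hsmall.le] using hpge e))
            (fun e _ => hp1 e) (monotone_ite_eq_univ hmono)
end

section
/- For a matroid rank function r: 2^N → ℤ≥0, the functional strength equals the floored unit-weight strength: min over A with r(A) < r(N) of ⌊ Σ_{e∈N}(r(A∪{e}) − r(A)) / (r(N) − r(A)) ⌋ equals ⌊ min over A with r(A) < r(N) of |N \ A| / (r(N) − r(A)) ⌋, and both equal the maximum number of pairwise disjoint bases of the matroid. -/
/-!
`k` disjoint bases force `k (r N - r A) ≤ ∑ e, (r (A ∪ {e}) - r A) ≤ |N \ A|` for every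
non-spanning `A`: by submodularity `r (A ∪ B) ≤ r A + ∑ e ∈ B, (r (A ∪ {e}) - r A)`, so
each base contributes at least `r N - r A` to the middle sum. Conversely,
`k (r N - r A) ≤ |N \ A|` for all `A` yields `k` disjoint bases by Edmonds' packing theorem,
proved for `k` possibly different matroids `M i` by induction on the ground set `G`: a nonempty
proper tight set `A` splits the problem into `M i | A` and `M i / A`; otherwise an element `e`
that is a loop of every `M i` can be deleted, and a non-loop `e` of some `M i` can be contracted
in that `M i` alone. So the three conditions on `k` coincide, and all three quantities are the
largest such `k`.
-/

open Finset

attribute [local instance] Classical.propDecidable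

noncomputable section

structure IsMatroidRankFn {α : Type*} [DecidableEq α] (r : Finset α → ℕ) : Prop where
  empty : r ∅ = 0
  step : ∀ (A : Finset α) (e : α), r A ≤ r (insert e A) ∧ r (insert e A) ≤ r A + 1
  submod : ∀ A B : Finset α, r (A ∪ B) + r (A ∩ B) ≤ r A + r B

def rankContract {α : Type*} [DecidableEq α] (r : Finset α → ℕ) (A X : Finset α) : ℕ :=
  r (A ∪ X) - r A

namespace IsMatroidRankFn

variable {α : Type*} [DecidableEq α] {r : Finset α → ℕ}

lemma le_union (hr : IsMatroidRankFn r) (A X : Finset α) : r A ≤ r (A ∪ X) := by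
  induction X using Finset.induction_on with
  | empty => simp
  | insert a X _ ih => exact ih.trans (by rw [union_insert]; exact (hr.step _ a).1)

lemma mono (hr : IsMatroidRankFn r) {A B : Finset α} (hAB : A ⊆ B) : r A ≤ r B := by
  simpa [union_eq_right.mpr hAB] using hr.le_union A B

lemma singleton_le_one (hr : IsMatroidRankFn r) (e : α) : r {e} ≤ 1 := by
  simpa [hr.empty] using (hr.step ∅ e).2

lemma insert_add_le_of_subset (hr : IsMatroidRankFn r) {A B : Finset α} (hAB : A ⊆ B) (e : α) :
    r (insert e B) + r A ≤ r B + r (insert e A) := by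
  have hinter : r A ≤ r (B ∩ insert e A) := hr.mono fun x hx => by simp [hAB hx, hx]
  have := hr.submod B (insert e A)
  rw [show B ∪ insert e A = insert e B by ext; simp; grind] at this
  omega

lemma union_le_add_sum (hr : IsMatroidRankFn r) (A X : Finset α) :
    r (A ∪ X) ≤ r A + ∑ e ∈ X, (r (insert e A) - r A) := by
  induction X using Finset.induction_on with
  | empty => simp
  | insert a X ha ih =>
    have := hr.insert_add_le_of_subset (subset_union_left (s₁ := A) (s₂ := X)) a
    have := (hr.step A a).1
    rw [union_insert, sum_insert ha]
    omega

lemma insert_eq_of_singleton_eq_zero (hr : IsMatroidRankFn r) {e : α} (he : r {e} = 0)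
    (X : Finset α) : r (insert e X) = r X := by
  have := hr.insert_add_le_of_subset (empty_subset X) e
  have := (hr.step X e).1
  simp only [insert_empty, he, hr.empty] at *
  omega

lemma erase_eq_of_singleton_eq_zero (hr : IsMatroidRankFn r) {e : α} (he : r {e} = 0)
    {X : Finset α} (heX : e ∈ X) : r (X.erase e) = r X := by
  conv_rhs => rw [← insert_erase heX, hr.insert_eq_of_singleton_eq_zero he]

lemma union_eq_of_spanning (hr : IsMatroidRankFn r) {S A : Finset α} (hSA : S ⊆ A)
    (hS : r S = r A) (C : Finset α) : r (S ∪ C) = r (A ∪ C) := by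
  have hinter : r S ≤ r ((S ∪ C) ∩ A) := hr.mono fun x hx => by simp [hx, hSA hx]
  have := hr.submod (S ∪ C) A
  rw [show S ∪ C ∪ A = A ∪ C by ext; simp; grind] at this
  have := hr.mono (union_subset_union hSA (subset_refl C))
  omega

lemma contract (hr : IsMatroidRankFn r) (A : Finset α) : IsMatroidRankFn (rankContract r A) where
  empty := by simp [rankContract]
  step X e := by
    have := hr.step (A ∪ X) e
    have := hr.le_union A X
    simp only [rankContract, union_insert]
    omega
  submod X Y := by
    have := hr.submod (A ∪ X) (A ∪ Y)
    rw [← union_union_distrib_left, ← union_inter_distrib_left] at this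
    have := hr.le_union A X
    have := hr.le_union A Y
    have := hr.le_union A (X ∩ Y)
    have := hr.le_union A (X ∪ Y)
    simp only [rankContract]
    omega

end IsMatroidRankFn

lemma Fintype.sum_add_eq_sum_add_of_forall_ne {ι M : Type*} [Fintype ι] [DecidableEq ι]
    [AddCommMonoid M] {f g : ι → M} {i : ι} (h : ∀ j ≠ i, f j = g j) :
    ∑ j, f j + g i = ∑ j, g j + f i := by
  have hcompl : ∑ j ∈ {i}ᶜ, f j = ∑ j ∈ {i}ᶜ, g j :=
    Finset.sum_congr rfl fun j hj => h j (by simpa using hj)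
  rw [Fintype.sum_eq_add_sum_compl i f, Fintype.sum_eq_add_sum_compl i g, hcompl]
  abel

lemma Nat.le_sInf_div_iff {β : Type*} {a c : β → ℕ} {u : ℕ} (hne : ∃ b, c b < u)
    {k : ℕ} :
    k ≤ sInf {x | ∃ b, c b < u ∧ x = a b / (u - c b)} ↔
      ∀ b, c b < u → k * (u - c b) ≤ a b := by
  obtain ⟨b₀, hb₀⟩ := hne
  constructor
  · intro h b hb
    exact (Nat.le_div_iff_mul_le (by omega)).mp (h.trans (Nat.sInf_le ⟨b, hb, rfl⟩))
  · refine fun h => le_csInf ⟨_, b₀, hb₀, rfl⟩ ?_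
    rintro _ ⟨b, hb, rfl⟩
    exact (Nat.le_div_iff_mul_le (by omega)).mpr (h b hb)

lemma Nat.le_floor_sInf_div_iff {β : Type*} {a c : β → ℕ} {u : ℕ} (hne : ∃ b, c b < u)
    {k : ℕ} :
    k ≤ ⌊sInf {x : ℝ | ∃ b, c b < u ∧
      x = (a b : ℝ) / ((u : ℝ) - (c b : ℝ))}⌋₊ ↔
      ∀ b, c b < u → k * (u - c b) ≤ a b := by
  obtain ⟨b₀, hb₀⟩ := hne
  have hpos : ∀ b, c b < u → (0 : ℝ) < (u : ℝ) - c b := fun b hb =>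
    sub_pos.mpr (by exact_mod_cast hb)
  have hnonneg :
      ∀ x ∈ {x : ℝ | ∃ b, c b < u ∧ x = (a b : ℝ) / ((u : ℝ) - (c b : ℝ))},
        0 ≤ x := by
    rintro _ ⟨b, hb, rfl⟩
    exact div_nonneg (Nat.cast_nonneg _) (hpos b hb).le
  rw [Nat.le_floor_iff (Real.sInf_nonneg hnonneg)]
  constructor
  · intro h b hb
    have := (le_div_iff₀ (hpos b hb)).mp (h.trans (csInf_le ⟨0, hnonneg⟩ ⟨b, hb, rfl⟩))
    rw [← Nat.cast_sub hb.le] at this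
    exact_mod_cast this
  · refine fun h => le_csInf ⟨_, b₀, hb₀, rfl⟩ ?_
    rintro _ ⟨b, hb, rfl⟩
    rw [le_div_iff₀ (hpos b hb), ← Nat.cast_sub hb.le]
    exact_mod_cast h b hb

lemma Nat.le_sSup_iff_mem {S : Set ℕ} (hS : IsLowerSet S) (hne : S.Nonempty)
    (hbdd : BddAbove S) {k : ℕ} : k ≤ sSup S ↔ k ∈ S :=
  ⟨fun hk => hS hk (Nat.sSup_mem hne hbdd), fun hk => le_csSup hbdd hk⟩

lemma pairwise_disjoint_union {α ι : Type*} [DecidableEq α] {S T : ι → Finset α}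
    {A B : Finset α}
    (hS : Pairwise (Function.onFun Disjoint S)) (hT : Pairwise (Function.onFun Disjoint T))
    (hSA : ∀ i, S i ⊆ A) (hTB : ∀ i, T i ⊆ B) (hAB : Disjoint A B) :
    Pairwise (Function.onFun Disjoint fun i => S i ∪ T i) := fun i j hij => by
  rw [Function.onFun, disjoint_union_left, disjoint_union_right, disjoint_union_right]
  exact ⟨⟨hS hij, hAB.mono (hSA i) (hTB j)⟩, ⟨hAB.symm.mono (hTB i) (hSA j), hT hij⟩⟩

section Packing

variable {α ι : Type*}

def HasSpanningPacking (rk : ι → Finset α → ℕ) (G : Finset α) : Prop :=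
  ∃ S : ι → Finset α, (∀ i, S i ⊆ G) ∧ (∀ i, rk i (S i) = rk i G) ∧
    Pairwise (Function.onFun Disjoint S)

variable {rk : ι → Finset α → ℕ} {G : Finset α}

lemma hasSpanningPacking_empty : HasSpanningPacking rk ∅ :=
  ⟨fun _ => ∅, fun _ => subset_refl _, fun _ => rfl, fun _ _ _ => disjoint_empty_left _⟩

lemma HasSpanningPacking.of_subset {G' : Finset α} (h : HasSpanningPacking rk G')
    (hG' : G' ⊆ G) (hrk : ∀ i, rk i G' = rk i G) : HasSpanningPacking rk G := by
  obtain ⟨S, hSG, hS, hdisj⟩ := h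
  exact ⟨S, fun i => (hSG i).trans hG', fun i => (hS i).trans (hrk i), hdisj⟩

variable [DecidableEq α]

lemma HasSpanningPacking.of_contract (hrk : ∀ i, IsMatroidRankFn (rk i)) {A : Finset α}
    (hAG : A ⊆ G) (hA : HasSpanningPacking rk A)
    (hGA : HasSpanningPacking (fun i => rankContract (rk i) A) (G \ A)) :
    HasSpanningPacking rk G := by
  obtain ⟨S, hSA, hS, hSdisj⟩ := hA
  obtain ⟨T, hTGA, hT, hTdisj⟩ := hGA
  have hSTG : ∀ i, S i ∪ T i ⊆ G := fun i =>
    union_subset ((hSA i).trans hAG) ((hTGA i).trans sdiff_subset)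
  refine ⟨fun i => S i ∪ T i, hSTG, fun i => le_antisymm ((hrk i).mono (hSTG i)) ?_,
    pairwise_disjoint_union hSdisj hTdisj hSA hTGA disjoint_sdiff⟩
  have hTi := hT i
  simp only [rankContract, union_sdiff_of_subset hAG] at hTi
  have := (hrk i).le_union A (T i)
  have := (hrk i).mono hAG
  rw [(hrk i).union_eq_of_spanning (hSA i) (hS i)]
  omega

lemma HasSpanningPacking.of_erase_contract [DecidableEq ι] {e : α} {i : ι}
    (hrk : ∀ i, IsMatroidRankFn (rk i)) (he : e ∈ G)
    (hrk_erase : ∀ j ≠ i, rk j (G.erase e) = rk j G)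
    (h : HasSpanningPacking (Function.update rk i (rankContract (rk i) {e})) (G.erase e)) :
    HasSpanningPacking rk G := by
  obtain ⟨S, hSG, hS, hSdisj⟩ := h
  let T : ι → Finset α := fun j => if j = i then {e} else ∅
  have hTe : ∀ j, T j ⊆ {e} := fun j => by by_cases hj : j = i <;> simp [T, hj]
  have hTdisj : Pairwise (Function.onFun Disjoint T) := fun j k hjk => by
    by_cases hj : j = i
    · simp [Function.onFun, T, hj ▸ hjk.symm]
    · simp [Function.onFun, T, hj]
  refine ⟨fun j => T j ∪ S j, fun j => union_subset
      ((hTe j).trans (singleton_subset_iff.mpr he)) ((hSG j).trans (erase_subset e G)), fun j => ?_,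
    pairwise_disjoint_union hTdisj hSdisj hTe hSG
      (disjoint_singleton_left.mpr (notMem_erase e G))⟩
  have hSj := hS j
  by_cases hj : j = i
  · subst hj
    simp only [Function.update_self, rankContract, ← insert_eq, insert_erase he] at hSj
    have := (hrk j).mono (singleton_subset_iff.mpr he)
    have := (hrk j).mono (singleton_subset_iff.mpr (mem_insert_self e (S j)))
    simp only [T, if_pos rfl, ← insert_eq]
    omega
  · simp only [Function.update_of_ne hj] at hSj
    simp [T, hj, hSj, hrk_erase j hj]

variable [Fintype ι]

def PackingCondition (rk : ι → Finset α → ℕ) (G : Finset α) : Prop :=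
  ∀ A ⊆ G, ∑ i, rk i G ≤ #(G \ A) + ∑ i, rk i A

lemma PackingCondition.of_tight (h : PackingCondition rk G) {A : Finset α} (hAG : A ⊆ G)
    (htight : ∑ i, rk i G = #(G \ A) + ∑ i, rk i A) : PackingCondition rk A := by
  intro X hXA
  have := h X (hXA.trans hAG)
  rw [card_sdiff_of_subset hAG] at htight
  rw [card_sdiff_of_subset (hXA.trans hAG)] at this
  rw [card_sdiff_of_subset hXA]
  have := card_le_card hXA
  have := card_le_card hAG
  omega

lemma PackingCondition.contract (h : PackingCondition rk G) (hrk : ∀ i, IsMatroidRankFn (rk i))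
    {A : Finset α} (hAG : A ⊆ G) :
    PackingCondition (fun i => rankContract (rk i) A) (G \ A) := by
  intro X hX
  have hAX := h (A ∪ X) (union_subset hAG (hX.trans sdiff_subset))
  simp only [rankContract, union_sdiff_of_subset hAG]
  rw [sum_tsub_distrib _ fun i _ => (hrk i).mono hAG,
    sum_tsub_distrib _ fun i _ => (hrk i).le_union A X, sdiff_sdiff_left, sup_eq_union]
  have := sum_le_sum fun i (_ : i ∈ univ) => (hrk i).mono hAG
  have := sum_le_sum fun i (_ : i ∈ univ) => (hrk i).le_union A X
  omega

lemma PackingCondition.erase_of_loop (h : PackingCondition rk G)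
    (hrk : ∀ i, IsMatroidRankFn (rk i)) {e : α} (he : e ∈ G) (hloop : ∀ i, rk i {e} = 0) :
    PackingCondition rk (G.erase e) := by
  intro X hX
  have := h (insert e X) (insert_subset he (hX.trans (erase_subset e G)))
  simpa only [(hrk _).insert_eq_of_singleton_eq_zero (hloop _), sdiff_insert, ← erase_sdiff_comm,
    (hrk _).erase_eq_of_singleton_eq_zero (hloop _) he] using this

lemma PackingCondition.rank_erase_eq (h : PackingCondition rk G)
    (hrk : ∀ i, IsMatroidRankFn (rk i)) {e : α} (he : e ∈ G) {i : ι} (hi : rk i {e} ≠ 0)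
    (hstrict : ∀ X ⊆ G.erase e, X.Nonempty → ∑ j, rk j G < #(G \ X) + ∑ j, rk j X)
    {j : ι} (hji : j ≠ i) : rk j (G.erase e) = rk j G := by
  refine ((hrk j).mono (erase_subset e G)).eq_of_not_lt fun hlt => ?_
  have hsum : ∑ k, rk k (G.erase e) < ∑ k, rk k G :=
    sum_lt_sum (fun k _ => (hrk k).mono (erase_subset e G)) ⟨j, mem_univ j, hlt⟩
  rcases (G.erase e).eq_empty_or_nonempty with hG | hG
  · -- Here `G = {e}`, with `e` a non-loop of `M i` and `M j`: the condition at `∅` fails.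
    have hpair := sum_le_sum_of_subset (f := fun k => rk k G) (subset_univ {i, j})
    rw [sum_pair hji.symm] at hpair
    have hempty := h ∅ (empty_subset G)
    have hGe : G = {e} := ((erase_eq_empty_iff G e).mp hG).resolve_left (ne_empty_of_mem he)
    simp only [sdiff_empty, hGe ▸ card_singleton e, (hrk _).empty, sum_const_zero] at hempty
    have := (hrk i).mono (singleton_subset_iff.mpr he)
    rw [hG, (hrk j).empty] at hlt
    omega
  · have hcard : #(G \ G.erase e) = 1 := by
      rw [card_sdiff_of_subset (erase_subset e G), card_erase_of_mem he]
      have := card_pos.mpr ⟨e, he⟩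
      omega
    have := hstrict _ (subset_refl _) hG
    omega

lemma PackingCondition.erase_contract [DecidableEq ι] {e : α} {i : ι}
    (h : PackingCondition rk G) (hrk : ∀ i, IsMatroidRankFn (rk i)) (he : e ∈ G)
    (hi : rk i {e} ≠ 0)
    (hstrict : ∀ X ⊆ G.erase e, X.Nonempty → ∑ j, rk j G < #(G \ X) + ∑ j, rk j X) :
    PackingCondition (Function.update rk i (rankContract (rk i) {e})) (G.erase e) := by
  intro X hX
  have heX : e ∉ X := fun heX => notMem_erase e G (hX heX)
  have hsumX := Fintype.sum_add_eq_sum_add_of_forall_ne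
    (f := fun j => Function.update rk i (rankContract (rk i) {e}) j X) (g := fun j => rk j X)
    (i := i) fun j hj => by simp [hj]
  have hsumG := Fintype.sum_add_eq_sum_add_of_forall_ne
    (f := fun j => Function.update rk i (rankContract (rk i) {e}) j (G.erase e))
    (g := fun j => rk j G) (i := i)
    fun j hj => by simp [hj, h.rank_erase_eq hrk he hi hstrict hj]
  simp only [Function.update_self, rankContract, ← insert_eq, insert_erase he] at hsumX hsumG
  have hcard : #(G.erase e \ X) + 1 = #(G \ X) := by
    rw [erase_sdiff_comm, card_erase_add_one (mem_sdiff.mpr ⟨he, heX⟩)]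
  have hone : rk i {e} = 1 := by have := (hrk i).singleton_le_one e; omega
  have := (hrk i).mono (subset_insert e X)
  have := (hrk i).mono (singleton_subset_iff.mpr (mem_insert_self e X))
  have := (hrk i).mono (singleton_subset_iff.mpr he)
  rcases X.eq_empty_or_nonempty with rfl | hXne
  · have := h ∅ (empty_subset G)
    simp only [(hrk _).empty, sum_const_zero, sdiff_empty, insert_empty] at *
    omega
  · have := hstrict X hX hXne
    omega

theorem hasSpanningPacking_of_packingCondition [DecidableEq ι]
    (hrk : ∀ i, IsMatroidRankFn (rk i)) (h : PackingCondition rk G) :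
    HasSpanningPacking rk G := by
  induction G using Finset.strongInduction generalizing rk with
  | H G ih =>
  rcases G.eq_empty_or_nonempty with rfl | ⟨e, he⟩
  · exact hasSpanningPacking_empty
  by_cases htight : ∃ A ⊆ G, A.Nonempty ∧ A ≠ G ∧ ∑ i, rk i G = #(G \ A) + ∑ i, rk i A
  · obtain ⟨A, hAG, hA, hAG', htight⟩ := htight
    exact .of_contract hrk hAG
      (ih A (ssubset_of_subset_of_ne hAG hAG') hrk (h.of_tight hAG htight))
      (ih (G \ A) (sdiff_ssubset hAG hA) (fun i => (hrk i).contract A) (h.contract hrk hAG))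
  have hstrict : ∀ X ⊆ G.erase e, X.Nonempty → ∑ i, rk i G < #(G \ X) + ∑ i, rk i X :=
    fun X hX hXne => (h X (hX.trans (erase_subset e G))).lt_of_ne fun heq =>
      htight ⟨X, hX.trans (erase_subset e G), hXne,
        fun hXG => notMem_erase e G (hX (hXG ▸ he)), heq⟩
  by_cases hloop : ∀ i, rk i {e} = 0
  · exact (ih _ (erase_ssubset he) hrk (h.erase_of_loop hrk he hloop)).of_subset
      (erase_subset e G) fun i => (hrk i).erase_eq_of_singleton_eq_zero (hloop i) he
  · obtain ⟨i, hi⟩ := not_forall.mp hloop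
    have hrk' : ∀ j, IsMatroidRankFn (Function.update rk i (rankContract (rk i) {e}) j) :=
      Function.forall_update_iff _ (p := fun _ r => IsMatroidRankFn r) |>.mpr
        ⟨(hrk i).contract {e}, fun j _ => hrk j⟩
    exact .of_erase_contract hrk he (fun j hj => h.rank_erase_eq hrk he hi hstrict hj)
      (ih _ (erase_ssubset he) hrk' (h.erase_contract hrk he hi hstrict))

end Packing

section Strength

variable {α : Type*} [Fintype α] [DecidableEq α] {r : Finset α → ℕ}

namespace IsMatroidRankFn

lemma card_mul_le_sum_insert_sub (hr : IsMatroidRankFn r) {ι : Type*} [Fintype ι]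
    {B : ι → Finset α} (hB : ∀ i, r (B i) = r univ)
    (hdisj : Pairwise (Function.onFun Disjoint B)) (A : Finset α) :
    Fintype.card ι * (r univ - r A) ≤ ∑ e, (r (insert e A) - r A) := by
  have hbase : ∀ i, r univ - r A ≤ ∑ e ∈ B i, (r (insert e A) - r A) := fun i => by
    have := hr.union_le_add_sum A (B i)
    have := hr.mono (subset_union_right (s₁ := A) (s₂ := B i))
    have := hB i
    omega
  calc Fintype.card ι * (r univ - r A) = ∑ _i, (r univ - r A) := by simp
    _ ≤ ∑ i, ∑ e ∈ B i, (r (insert e A) - r A) := sum_le_sum fun i _ => hbase i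
    _ = ∑ e ∈ univ.biUnion B, (r (insert e A) - r A) :=
      (sum_biUnion fun i _ j _ hij => hdisj hij).symm
    _ ≤ ∑ e, (r (insert e A) - r A) := sum_le_sum_of_subset (subset_univ _)

lemma sum_insert_sub_le_card_sdiff (hr : IsMatroidRankFn r) (A : Finset α) :
    ∑ e, (r (insert e A) - r A) ≤ #(univ \ A) := by
  calc ∑ e, (r (insert e A) - r A) = ∑ e ∈ univ \ A, (r (insert e A) - r A) :=
        (sum_subset (subset_univ _) fun e _ he => by
          simp [insert_eq_of_mem (by simpa using he : e ∈ A)]).symm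
    _ ≤ ∑ _e ∈ univ \ A, 1 := sum_le_sum fun e _ => by have := hr.step A e; omega
    _ = #(univ \ A) := (card_eq_sum_ones _).symm

lemma exists_disjoint_bases (hr : IsMatroidRankFn r) {k : ℕ}
    (h : ∀ A, r A < r univ → k * (r univ - r A) ≤ #(univ \ A)) :
    ∃ B : Fin k → Finset α, (∀ i, r (B i) = r univ) ∧
      Pairwise (Function.onFun Disjoint B) := by
  have hcond : PackingCondition (fun _ : Fin k => r) univ := fun A _ => by
    simp only [sum_const, card_univ, Fintype.card_fin, smul_eq_mul]
    rcases lt_or_ge (r A) (r univ) with hA | hA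
    · have := h A hA
      have := Nat.mul_le_mul_left k hA.le
      rw [Nat.mul_sub] at *
      omega
    · have := Nat.mul_le_mul_left k hA
      omega
  obtain ⟨B, -, hB, hdisj⟩ := hasSpanningPacking_of_packingCondition (fun _ => hr) hcond
  exact ⟨B, hB, hdisj⟩

lemma tfae_disjoint_bases (hr : IsMatroidRankFn r) (k : ℕ) : List.TFAE
    [∃ B : Fin k → Finset α, (∀ i, r (B i) = r univ) ∧
       Pairwise (Function.onFun Disjoint B),
     ∀ A, r A < r univ → k * (r univ - r A) ≤ ∑ e, (r (insert e A) - r A),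
     ∀ A, r A < r univ → k * (r univ - r A) ≤ #(univ \ A)] := by
  tfae_have 1 → 2 := fun ⟨B, hB, hdisj⟩ A _ => by
    simpa using hr.card_mul_le_sum_insert_sub hB hdisj A
  tfae_have 2 → 3 := fun h A hA => (h A hA).trans (hr.sum_insert_sub_le_card_sdiff A)
  tfae_have 3 → 1 := hr.exists_disjoint_bases
  tfae_finish

lemma le_sSup_disjoint_bases_iff (hr : IsMatroidRankFn r) (hpos : 0 < r univ) {k : ℕ} :
    k ≤ sSup {k | ∃ B : Fin k → Finset α, (∀ i, r (B i) = r univ) ∧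
      Pairwise (Function.onFun Disjoint B)} ↔
    ∃ B : Fin k → Finset α, (∀ i, r (B i) = r univ) ∧
      Pairwise (Function.onFun Disjoint B) := by
  apply Nat.le_sSup_iff_mem
  · rintro k' k hkk' ⟨B, hB, hdisj⟩
    exact ⟨B ∘ Fin.castLE hkk', fun i => hB _,
      hdisj.comp_of_injective (Fin.castLE_injective hkk')⟩
  · exact ⟨0, Fin.elim0, fun i => i.elim0, fun i => i.elim0⟩
  · refine ⟨Fintype.card α, fun k ⟨B, hB, hdisj⟩ => ?_⟩
    have := (hr.card_mul_le_sum_insert_sub hB hdisj ∅).trans (hr.sum_insert_sub_le_card_sdiff ∅)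
    simp only [Fintype.card_fin, hr.empty, Nat.sub_zero, sdiff_empty, card_univ] at this
    exact (Nat.le_mul_of_pos_right k hpos).trans this

end IsMatroidRankFn

end Strength

/-- For a matroid rank function `r`, the functional strength equals
the floored unit-weight strength, and both equal the maximum number of pairwise
disjoint bases of the matroid (Edmonds' base packing theorem). -/
theorem matroid_functional_strength_eq_base_packing {N : Type*} [Fintype N]
    [DecidableEq N] (r : Finset N → ℕ)
    (hempty : r ∅ = 0)
    (hstep : ∀ (A : Finset N) (e : N), r A ≤ r (insert e A) ∧ r (insert e A) ≤ r A + 1)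
    (hsub : ∀ A B : Finset N, r (A ∪ B) + r (A ∩ B) ≤ r A + r B) :
    sInf {k | ∃ A : Finset N, r A < r Finset.univ ∧
        k = (∑ e : N, (r (insert e A) - r A)) / (r Finset.univ - r A)} =
      Nat.floor (sInf {x : ℝ | ∃ A : Finset N, r A < r Finset.univ ∧
        x = ((Finset.univ \ A).card : ℝ) / ((r Finset.univ : ℝ) - (r A : ℝ))}) ∧
    sInf {k | ∃ A : Finset N, r A < r Finset.univ ∧
        k = (∑ e : N, (r (insert e A) - r A)) / (r Finset.univ - r A)} =
      sSup {k | ∃ B : Fin k → Finset N, (∀ i, r (B i) = r Finset.univ) ∧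
        Pairwise (Function.onFun Disjoint B)} := by
  have hr : IsMatroidRankFn r := ⟨hempty, hstep, hsub⟩
  rcases Nat.eq_zero_or_pos (r univ) with h0 | hpos
  · -- Junk values: both infima are over `∅`, and any number of empty bases exist.
    simp only [h0, Nat.not_lt_zero, false_and, exists_false, Set.ofPred_false, Nat.sInf_empty,
      Real.sInf_empty, Nat.floor_zero, true_and]
    refine (Nat.sSup_of_not_bddAbove <| not_bddAbove_iff.mpr fun n => ?_).symm
    exact ⟨n + 1, ⟨fun _ => ∅, fun _ => hempty, fun _ _ _ => disjoint_empty_left _⟩,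
      n.lt_succ_self⟩
  have hne : ∃ A : Finset N, r A < r univ := ⟨∅, hempty ▸ hpos⟩
  refine ⟨eq_of_forall_le_iff fun k => ?_, eq_of_forall_le_iff fun k => ?_⟩
  · rw [Nat.le_sInf_div_iff hne, Nat.le_floor_sInf_div_iff hne]
    exact (hr.tfae_disjoint_bases k).out 1 2
  · rw [Nat.le_sInf_div_iff hne, hr.le_sSup_disjoint_bases_iff hpos]
    exact ((hr.tfae_disjoint_bases k).out 0 1).symm
end
end
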